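/- If the Atiyah–Sutcliffe linear independence conjecture holds for 2m points, i.e. for every y ∈ C_{2m}(ℝ³) the 2m Atiyah–Sutcliffe polynomials p_1, …, p_{2m} associated to y are linearly independent over ℂ, then the symplectic linear independence conjecture holds for Sp(m), i.e. for every x ∈ 𝒞_m(ℝ³) the 2m symplectic polynomials p_α, α ∈ I = {1, 1̄, …, m, m̄}, associated to x are linearly independent over ℂ. -/

import Mathlib

/-! The symplectic polynomials of `x` are, by construction, the Atiyah–Sutcliffe polynomials of
the `2m` points `ĝ(x) = (x_1, −x_1, …, x_m, −x_m)`. The conditions `x_a ≠ 0` and `x_a ± x_b ≠ 0`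
defining `𝒞_m(ℝ³)` say precisely that these `2m` points are pairwise distinct, i.e. that
`ĝ(x) ∈ C_{2m}(ℝ³)`, so the Atiyah–Sutcliffe conjecture for `2m` points applies to them. -/

open Polynomial Finset

/-- The Hopf map `h : ℂ² → ℝ³`, where `ℝ³` is identified with `ℂ × ℝ`:
`h(u,v) = (2·u·conj v, |u|² − |v|²)`. -/
noncomputable def hopf (p : ℂ × ℂ) : ℂ × ℝ :=
  (2 * p.1 * (starRingEnd ℂ) p.2, ‖p.1‖ ^ 2 - ‖p.2‖ ^ 2)

/-- `x ∈ 𝒞_m(ℝ³)`: an `m`-tuple of points of `ℝ³ ≅ ℂ × ℝ` with `x_a ≠ 0` for all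
`a` and `x_a ± x_b ≠ 0` for all `a < b`. -/
def SympConfig (m : ℕ) (x : Fin m → ℂ × ℝ) : Prop :=
  (∀ a : Fin m, x a ≠ 0) ∧
    ∀ a b : Fin m, a < b → x a + x b ≠ 0 ∧ x a - x b ≠ 0

/-- The `2m` points `x_α`, `α ∈ I = {1, 1̄, …, m, m̄}`, of the symplectic
construction: `x_α = x_a` if `α = a`, and `x_α = −x_a` if `α = ā`. The index
set `I` (ordered `1 < 1̄ < ⋯ < m < m̄`) is identified with `Fin (2m)` via
`a ↦ 2a−1`, `ā ↦ 2a` (0-indexed: `a ↦ 2a`, `ā ↦ 2a+1`). -/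
def sympPoint {m : ℕ} (x : Fin m → ℂ × ℝ) (α : Fin (2 * m)) : ℂ × ℝ :=
  if (α : ℕ) % 2 = 0 then x ⟨(α : ℕ) / 2, by have := α.isLt; omega⟩
  else -(x ⟨(α : ℕ) / 2, by have := α.isLt; omega⟩)

/-- The map `ĝ : 𝒞_m(ℝ³) → C_{2m}(ℝ³)` sending `(x_1, …, x_m)` to
`(x_1, −x_1, …, x_m, −x_m)`. -/
def ghat {m : ℕ} (x : Fin m → ℂ × ℝ) : Fin (2 * m) → ℂ × ℝ :=
  fun β =>
    if (β : ℕ) % 2 = 0 then x ⟨(β : ℕ) / 2, by have := β.isLt; omega⟩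
    else -(x ⟨(β : ℕ) / 2, by have := β.isLt; omega⟩)

/-- `u, v` form a system of Hopf lifts for the `n`-tuple `y`:
`h(u_{ab}, v_{ab}) = y_b − y_a` for all `a ≠ b`. -/
def HopfLifts (n : ℕ) (y : Fin n → ℂ × ℝ) (u v : Fin n → Fin n → ℂ) : Prop :=
  ∀ a b : Fin n, a ≠ b → hopf (u a b, v a b) = y b - y a

/-- The Atiyah–Sutcliffe polynomial `p_a(t) = ∏_{b ≠ a} (u_{ab}·t − v_{ab})`. -/
noncomputable def ASpoly (n : ℕ) (u v : Fin n → Fin n → ℂ) (a : Fin n) : Polynomial ℂ :=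
  ∏ b ∈ Finset.univ.erase a, (Polynomial.C (u a b) * Polynomial.X - Polynomial.C (v a b))

/-- The `n × n` matrix whose `a`-th column consists of the coefficients of `p_a`,
ordered by increasing powers of `t`. -/
noncomputable def ASmatrix (n : ℕ) (u v : Fin n → Fin n → ℂ) : Matrix (Fin n) (Fin n) ℂ :=
  Matrix.of fun i a => (ASpoly n u v a).coeff i

/-- `det(p_{ab}, p_{ba})`: the determinant of the 2×2 matrix whose columns are the
coefficient vectors `(−v_{ab}, u_{ab})` and `(−v_{ba}, u_{ba})`. -/
noncomputable def ASpairDet (n : ℕ) (u v : Fin n → Fin n → ℂ) (a b : Fin n) : ℂ :=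
  Matrix.det !![-(v a b), -(v b a); u a b, u b a]

/-- The denominator `∏_{a<b} det(p_{ab}, p_{ba})` of the normalized determinant. -/
noncomputable def ASdenom (n : ℕ) (u v : Fin n → Fin n → ℂ) : ℂ :=
  ∏ p ∈ Finset.univ.filter (fun p : Fin n × Fin n => p.1 < p.2), ASpairDet n u v p.1 p.2

/-- The Atiyah–Sutcliffe normalized determinant
`D = det(p_1, …, p_n) / ∏_{a<b} det(p_{ab}, p_{ba})`, computed from the lifts `u, v`. -/
noncomputable def ASdet (n : ℕ) (u v : Fin n → Fin n → ℂ) : ℂ :=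
  (ASmatrix n u v).det / ASdenom n u v

/-- The symplectic polynomial `p_α(t) = ∏_{β ≠ α} (u_{αβ}·t − v_{αβ})`, `α ∈ I`. -/
noncomputable def sympPoly (m : ℕ) (u v : Fin (2 * m) → Fin (2 * m) → ℂ)
    (α : Fin (2 * m)) : Polynomial ℂ :=
  ∏ β ∈ Finset.univ.erase α, (Polynomial.C (u α β) * Polynomial.X - Polynomial.C (v α β))

/-- The `2m × 2m` matrix whose `α`-th column consists of the coefficients of the
symplectic polynomial `p_α`, ordered by increasing powers of `t`. -/
noncomputable def sympMatrix (m : ℕ) (u v : Fin (2 * m) → Fin (2 * m) → ℂ) :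
    Matrix (Fin (2 * m)) (Fin (2 * m)) ℂ :=
  Matrix.of fun i α => (sympPoly m u v α).coeff i

/-- `det(p_{αβ}, p_{βα})` for the symplectic construction. -/
noncomputable def sympPairDet (m : ℕ) (u v : Fin (2 * m) → Fin (2 * m) → ℂ)
    (α β : Fin (2 * m)) : ℂ :=
  Matrix.det !![-(v α β), -(v β α); u α β, u β α]

/-- The denominator `∏_{α<β} det(p_{αβ}, p_{βα})` of the symplectic normalized
determinant. -/
noncomputable def sympDenom (m : ℕ) (u v : Fin (2 * m) → Fin (2 * m) → ℂ) : ℂ :=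
  ∏ p ∈ Finset.univ.filter (fun p : Fin (2 * m) × Fin (2 * m) => p.1 < p.2),
    sympPairDet m u v p.1 p.2

/-- The symplectic normalized determinant
`D_S = det(p_1, p_{1̄}, …, p_m, p_{m̄}) / ∏_{α<β} det(p_{αβ}, p_{βα})`,
computed from the lifts `u, v`. -/
noncomputable def sympDet (m : ℕ) (u v : Fin (2 * m) → Fin (2 * m) → ℂ) : ℂ :=
  (sympMatrix m u v).det / sympDenom m u v

theorem sympPoly_eq_ASpoly (m : ℕ) (u v : Fin (2 * m) → Fin (2 * m) → ℂ) :
    sympPoly m u v = ASpoly (2 * m) u v :=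
  rfl

theorem sympPoint_injective {m : ℕ} {x : Fin m → ℂ × ℝ} (hinj : Function.Injective x)
    (hneg : ∀ a b, x a ≠ -x b) : Function.Injective (sympPoint x) := by
  intro α β h
  have hdiv_mod : (α : ℕ) / 2 = β / 2 ∧ (α : ℕ) % 2 = β % 2 := by
    unfold sympPoint at h
    split_ifs at h with hα hβ hβ
    · exact ⟨congrArg Fin.val (hinj h), by omega⟩
    · exact absurd h (hneg _ _)
    · exact absurd h.symm (hneg _ _)
    · exact ⟨congrArg Fin.val (hinj (neg_injective h)), by omega⟩
  exact Fin.ext (by omega)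

namespace SympConfig

variable {m : ℕ} {x : Fin m → ℂ × ℝ}

theorem injective (hx : SympConfig m x) : Function.Injective x := by
  intro a b hab
  by_contra hne
  rcases lt_or_gt_of_ne hne with h | h
  · exact (hx.2 a b h).2 (sub_eq_zero.mpr hab)
  · exact (hx.2 b a h).2 (sub_eq_zero.mpr hab.symm)

theorem ne_neg (hx : SympConfig m x) (a b : Fin m) : x a ≠ -x b := by
  intro hab
  rcases lt_trichotomy a b with h | rfl | h
  · exact (hx.2 a b h).1 (eq_neg_iff_add_eq_zero.mp hab)
  · exact hx.1 a (self_eq_neg.mp hab)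
  · exact (hx.2 b a h).1 (by rw [hab, add_neg_cancel])

end SympConfig

/-- If the Atiyah–Sutcliffe linear independence conjecture holds for `2m` points,
i.e. for every `y ∈ C_{2m}(ℝ³)` (and every valid choice of Hopf lifts, linear
independence not depending on that choice) the `2m` Atiyah–Sutcliffe polynomials
`p_1, …, p_{2m}` are linearly independent over `ℂ`, then the symplectic linear
independence conjecture holds for `Sp(m)`: for every `x ∈ 𝒞_m(ℝ³)` the `2m`
symplectic polynomials `p_α`, `α ∈ I = {1, 1̄, …, m, m̄}`, are linearly
independent over `ℂ`. -/
theorem AS_LIC_implies_symplectic_LIC (m : ℕ)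
    (hAS : ∀ y : Fin (2 * m) → ℂ × ℝ, Function.Injective y →
      ∀ u v : Fin (2 * m) → Fin (2 * m) → ℂ, HopfLifts (2 * m) y u v →
        LinearIndependent ℂ (ASpoly (2 * m) u v)) :
    ∀ x : Fin m → ℂ × ℝ, SympConfig m x →
      ∀ u v : Fin (2 * m) → Fin (2 * m) → ℂ,
        (∀ α β : Fin (2 * m), α ≠ β →
          hopf (u α β, v α β) = sympPoint x β - sympPoint x α) →
        LinearIndependent ℂ (sympPoly m u v) := by
  intro x hx u v hlift
  rw [sympPoly_eq_ASpoly]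
  exact hAS (sympPoint x) (sympPoint_injective hx.injective hx.ne_neg) u v hlift
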